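/- arXiv:1210.4672 — 3 statements merged into one kernel-verified Lean document; each statement's English description precedes it below -/
import Mathlib

section
/- Let φ ∈ C²(ℝ) with c₁ < φ'(t) < c₂ for all t, and let t_m < t_{m+1} satisfy φ(t_m) = (m+1/2)π and φ(t_{m+1}) = (m+3/2)π. Suppose α ∈ C²(ℝ) satisfies: α(t_m) = α(t_{m+1}) = 0; |α''(t)| ≤ ε(2φ'(t) + α'(t)) for t ∈ [t_m, t_{m+1}]; |α(t') − α(t'')| < π for all t', t'' ∈ [t_m, t_{m+1}]; and ∫_{t_m}^{t_{m+1}} α'(u) du = 0. Then |α'(t)| ≤ 3πε for all t ∈ [t_m, t_{m+1}]. -/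
/-!
Rolle's theorem gives a zero `t₀` of `α'` in `[t_m, t_{m+1}]`. Since `|α''| ≤ ε ψ'` with
`ψ = 2φ + α`, the comparison principle bounds `|α'(t) - α'(t₀)|` by `ε |ψ(t) - ψ(t₀)|`, and
`ψ` is nondecreasing on the interval with total increase `ψ(t_{m+1}) - ψ(t_m) = 2π`.
So in fact `|α'| ≤ 2πε` there.
-/

open Set

section DerivComparison

variable {f f' B B' : ℝ → ℝ} {a b : ℝ}

theorem abs_sub_le_sub_of_abs_deriv_le (hab : a ≤ b)
    (hf : ∀ x ∈ Icc a b, HasDerivAt f (f' x) x) (hB : ∀ x ∈ Icc a b, HasDerivAt B (B' x) x)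
    (hbound : ∀ x ∈ Icc a b, |f' x| ≤ B' x) :
    |f b - f a| ≤ B b - B a := by
  have key := image_norm_le_of_norm_deriv_right_le_deriv_boundary'
    (f := fun x => f x - f a) (f' := f') (B := fun x => B x - B a) (B' := B')
    (fun x hx => ((hf x hx).sub_const (f a)).continuousAt.continuousWithinAt)
    (fun x hx => ((hf x (Ico_subset_Icc_self hx)).sub_const (f a)).hasDerivWithinAt)
    (by simp)
    (fun x hx => ((hB x hx).sub_const (B a)).continuousAt.continuousWithinAt)
    (fun x hx => ((hB x (Ico_subset_Icc_self hx)).sub_const (B a)).hasDerivWithinAt)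
    (fun x hx => hbound x (Ico_subset_Icc_self hx))
    (right_mem_Icc.mpr hab)
  simpa only [Real.norm_eq_abs] using key

theorem abs_le_sub_of_abs_deriv_le_of_eq_zero
    (hf : ∀ x ∈ Icc a b, HasDerivAt f (f' x) x) (hB : ∀ x ∈ Icc a b, HasDerivAt B (B' x) x)
    (hbound : ∀ x ∈ Icc a b, |f' x| ≤ B' x) {t₀ : ℝ} (ht₀ : t₀ ∈ Icc a b) (hf₀ : f t₀ = 0) :
    ∀ t ∈ Icc a b, |f t| ≤ B b - B a := by
  have hsub : ∀ x ∈ Icc a b, ∀ y ∈ Icc a b, x ≤ y → |f y - f x| ≤ B y - B x :=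
    fun x hx y hy hxy => abs_sub_le_sub_of_abs_deriv_le hxy
      (fun z hz => hf z (Icc_subset_Icc hx.1 hy.2 hz))
      (fun z hz => hB z (Icc_subset_Icc hx.1 hy.2 hz))
      (fun z hz => hbound z (Icc_subset_Icc hx.1 hy.2 hz))
  have hB_mono : ∀ x ∈ Icc a b, ∀ y ∈ Icc a b, x ≤ y → B x ≤ B y :=
    fun x hx y hy hxy => sub_nonneg.mp ((abs_nonneg _).trans (hsub x hx y hy hxy))
  have ha : a ∈ Icc a b := left_mem_Icc.mpr (ht₀.1.trans ht₀.2)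
  have hb : b ∈ Icc a b := right_mem_Icc.mpr (ht₀.1.trans ht₀.2)
  intro t ht
  rcases le_total t₀ t with h | h
  · have := hsub t₀ ht₀ t ht h
    rw [hf₀, sub_zero] at this
    linarith [hB_mono a ha t₀ ht₀ ht₀.1, hB_mono t ht b hb ht.2]
  · have := hsub t ht t₀ ht₀ h
    rw [hf₀, zero_sub, abs_neg] at this
    linarith [hB_mono a ha t ht ht.1, hB_mono t₀ ht₀ b hb ht₀.2]

end DerivComparison

theorem stmt1_general (ε : ℝ) (φ α : ℝ → ℝ) (m : ℤ) (tm tm1 : ℝ)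
    (hε : 0 < ε)
    (hφ : ContDiff ℝ 2 φ)
    (hα : ContDiff ℝ 2 α)
    (ht : tm < tm1)
    (hφm : φ tm = (m + 1 / 2) * Real.pi)
    (hφm1 : φ tm1 = (m + 3 / 2) * Real.pi)
    (hαm : α tm = 0) (hαm1 : α tm1 = 0)
    (hα'' : ∀ t ∈ Set.Icc tm tm1,
      |deriv (deriv α) t| ≤ ε * (2 * deriv φ t + deriv α t)) :
    ∀ t ∈ Set.Icc tm tm1, |deriv α t| ≤ 3 * Real.pi * ε := by
  have hφd : Differentiable ℝ φ := hφ.differentiable (by norm_num)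
  have hαd : Differentiable ℝ α := hα.differentiable (by norm_num)
  obtain ⟨t₀, ht₀, hα't₀⟩ := exists_deriv_eq_zero ht hαd.continuous.continuousOn (hαm.trans hαm1.symm)
  intro t ht
  calc |deriv α t|
      ≤ ε * (2 * φ tm1 + α tm1) - ε * (2 * φ tm + α tm) :=
        abs_le_sub_of_abs_deriv_le_of_eq_zero
          (fun x _ => (hα.differentiable_deriv_two x).hasDerivAt)
          (fun x _ => (((hφd x).hasDerivAt.const_mul 2).add (hαd x).hasDerivAt).const_mul ε)
          hα'' (Ioo_subset_Icc_self ht₀) hα't₀ t ht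
    _ = 2 * Real.pi * ε := by rw [hφm, hφm1, hαm, hαm1]; ring
    _ ≤ 3 * Real.pi * ε := by nlinarith [Real.pi_pos]

theorem stmt1 (ε c₁ c₂ : ℝ) (φ α : ℝ → ℝ) (m : ℤ) (tm tm1 : ℝ)
    (hε : 0 < ε)
    (hφ : ContDiff ℝ 2 φ)
    (hφ1 : ∀ t, c₁ < deriv φ t) (hφ2 : ∀ t, deriv φ t < c₂)
    (hα : ContDiff ℝ 2 α)
    (ht : tm < tm1)
    (hφm : φ tm = (m + 1 / 2) * Real.pi)
    (hφm1 : φ tm1 = (m + 3 / 2) * Real.pi)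
    (hαm : α tm = 0) (hαm1 : α tm1 = 0)
    (hα'' : ∀ t ∈ Set.Icc tm tm1,
      |deriv (deriv α) t| ≤ ε * (2 * deriv φ t + deriv α t))
    (hosc : ∀ t' ∈ Set.Icc tm tm1, ∀ t'' ∈ Set.Icc tm tm1, |α t' - α t''| < Real.pi)
    (hint : ∫ u in tm..tm1, deriv α u = 0) :
    ∀ t ∈ Set.Icc tm tm1, |deriv α t| ≤ 3 * Real.pi * ε :=
  stmt1_general ε φ α m tm tm1 hε hφ hα ht hφm hφm1 hαm hαm1 hα''
end

section
/- Let ψ be a Schwartz function with ψ̂ supported in [1−Δ, 1+Δ], 0 < Δ < 1. Let A > 0, φ₀, ω ∈ ℝ with ω > 0, and consider the harmonic signal h(t) = A cos(φ₀ + 2πωt). Then for all a > 0 and b ∈ ℝ, the continuous wavelet transform W_h(a,b) = ∫ h(t) a^{−1/2} \overline{ψ((t−b)/a)} dt equals (A/2) e^{i(φ₀ + 2πωb)} √a \overline{ψ̂(aω)}. -/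
/-!
Substituting `t = b + a s` turns the transform into `√a ∫ cos (θ + 2π aω s) · conj ψ(s) ds` with
`θ = φ₀ + 2πωb`. Splitting the cosine into `(e^{i·} + e^{-i·}) / 2` produces `conj ψ̂(aω)` and
`conj ψ̂(-aω)`, and the latter vanishes because `ψ̂` is supported on positive frequencies.
-/

open MeasureTheory Complex ComplexConjugate FourierTransform

theorem integral_cexp_mul_conj_eq_conj_fourier (f : ℝ → ℂ) (ξ : ℝ) :
    ∫ s : ℝ, exp (↑(2 * Real.pi * ξ * s) * I) * conj (f s) = conj (𝓕 f ξ) := by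
  rw [Real.fourier_real_eq_integral_exp_smul, ← integral_conj]
  congr 1 with s
  rw [smul_eq_mul, map_mul, ← exp_conj, map_mul, conj_ofReal, conj_I]
  congr 2
  push_cast
  ring

theorem MeasureTheory.Integrable.cexp_mul_conj {f : ℝ → ℂ} (hf : Integrable f) (c : ℝ) :
    Integrable fun s : ℝ => exp (↑(c * s) * I) * conj (f s) := by
  refine (conjCLE.toContinuousLinearMap.integrable_comp hf).bdd_mul (c := 1) ?_ ?_
  · fun_prop
  · filter_upwards with s
    rw [norm_exp_ofReal_mul_I]

theorem integral_cos_mul_conj {f : ℝ → ℂ} (hf : Integrable f) (θ ξ : ℝ) :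
    ∫ s : ℝ, (Real.cos (θ + 2 * Real.pi * ξ * s) : ℂ) * conj (f s)
      = exp (θ * I) / 2 * conj (𝓕 f ξ) + exp (-θ * I) / 2 * conj (𝓕 f (-ξ)) := by
  have euler (s : ℝ) : (Real.cos (θ + 2 * Real.pi * ξ * s) : ℂ) * conj (f s)
      = exp (θ * I) / 2 * (exp (↑(2 * Real.pi * ξ * s) * I) * conj (f s))
        + exp (-θ * I) / 2 * (exp (↑(2 * Real.pi * (-ξ) * s) * I) * conj (f s)) := by
    have split_pos : ↑(θ + 2 * Real.pi * ξ * s) * I = θ * I + ↑(2 * Real.pi * ξ * s) * I := by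
      push_cast; ring
    have split_neg : -↑(θ + 2 * Real.pi * ξ * s) * I = -θ * I + ↑(2 * Real.pi * (-ξ) * s) * I := by
      push_cast; ring
    rw [ofReal_cos, cos, split_pos, split_neg, exp_add, exp_add]
    ring
  simp_rw [euler]
  rw [integral_add ((hf.cexp_mul_conj _).const_mul _) ((hf.cexp_mul_conj _).const_mul _),
    integral_const_mul, integral_const_mul, integral_cexp_mul_conj_eq_conj_fourier,
    integral_cexp_mul_conj_eq_conj_fourier]

theorem integral_comp_sub_div {E : Type*} [NormedAddCommGroup E] [NormedSpace ℝ E]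
    (F : ℝ → E) (b : ℝ) {a : ℝ} (ha : 0 < a) :
    ∫ t : ℝ, F ((t - b) / a) = a • ∫ s : ℝ, F s := by
  rw [integral_sub_right_eq_self (fun t => F (t / a)) b, Measure.integral_comp_div,
    abs_of_pos ha]

theorem integral_cos_mul_wavelet {ψ : ℝ → ℂ} (hψ : Integrable ψ) (A φ₀ ω : ℝ) {a : ℝ}
    (ha : 0 < a) (b : ℝ) :
    ∫ t : ℝ, (↑(A * Real.cos (φ₀ + 2 * Real.pi * ω * t)) : ℂ) *
        (↑(Real.sqrt a))⁻¹ * conj (ψ ((t - b) / a))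
      = A / 2 * Real.sqrt a * (exp (↑(φ₀ + 2 * Real.pi * ω * b) * I) * conj (𝓕 ψ (a * ω))
          + exp (-↑(φ₀ + 2 * Real.pi * ω * b) * I) * conj (𝓕 ψ (-(a * ω)))) := by
  set θ := φ₀ + 2 * Real.pi * ω * b
  have phase (t : ℝ) : φ₀ + 2 * Real.pi * ω * t = θ + 2 * Real.pi * (a * ω) * ((t - b) / a) := by
    simp only [θ]
    field_simp
    ring
  simp_rw [phase]
  rw [integral_comp_sub_div (fun s => (↑(A * Real.cos (θ + 2 * Real.pi * (a * ω) * s)) : ℂ) *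
      (↑(Real.sqrt a))⁻¹ * conj (ψ s)) b ha]
  have pull_const (s : ℝ) : (↑(A * Real.cos (θ + 2 * Real.pi * (a * ω) * s)) : ℂ) *
      (↑(Real.sqrt a))⁻¹ * conj (ψ s)
        = A * (↑(Real.sqrt a))⁻¹ * ((Real.cos (θ + 2 * Real.pi * (a * ω) * s) : ℂ) * conj (ψ s)) := by
    push_cast; ring
  have sqrt_ne : (Real.sqrt a : ℂ) ≠ 0 := ofReal_ne_zero.mpr (Real.sqrt_pos.mpr ha).ne'
  have sqrt_sq : (a : ℂ) = Real.sqrt a * Real.sqrt a := by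
    rw [← ofReal_mul, Real.mul_self_sqrt ha.le]
  simp_rw [pull_const]
  rw [integral_const_mul, integral_cos_mul_conj hψ, real_smul, sqrt_sq]
  field_simp

theorem apply_neg_eq_zero_of_support_subset_Ioi {M : Type*} [Zero M] {g : ℝ → M}
    (hg : Function.support g ⊆ Set.Ioi 0) {ξ : ℝ} (hξ : 0 ≤ ξ) : g (-ξ) = 0 :=
  Function.notMem_support.mp fun hmem => by
    have := hg hmem
    simp only [Set.mem_Ioi, Left.neg_pos_iff] at this
    linarith

theorem stmt9_general (Δ A φ₀ ω : ℝ) (ψ : SchwartzMap ℝ ℂ)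
    (hΔ1 : Δ < 1)
    (hsupp : Function.support (FourierTransform.fourier (⇑ψ : ℝ → ℂ)) ⊆ Set.Icc (1 - Δ) (1 + Δ))
    (hω : 0 < ω) :
    ∀ a : ℝ, 0 < a → ∀ b : ℝ,
      (∫ t : ℝ, (↑(A * Real.cos (φ₀ + 2 * Real.pi * ω * t)) : ℂ) *
          (↑(Real.sqrt a))⁻¹ * (starRingEnd ℂ) (ψ ((t - b) / a)))
        = (↑A / 2) * Complex.exp (Complex.I * ↑(φ₀ + 2 * Real.pi * ω * b)) *
          ↑(Real.sqrt a) * (starRingEnd ℂ) (FourierTransform.fourier (⇑ψ : ℝ → ℂ) (a * ω)) := by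
  intro a ha b
  have positive_freq : Function.support (𝓕 (⇑ψ : ℝ → ℂ)) ⊆ Set.Ioi 0 :=
    hsupp.trans fun ξ hξ => Set.mem_Ioi.mpr (by linarith [hξ.1])
  rw [integral_cos_mul_wavelet ψ.integrable A φ₀ ω ha b,
    apply_neg_eq_zero_of_support_subset_Ioi positive_freq (mul_pos ha hω).le, map_zero, mul_zero,
    add_zero, mul_comm I]
  ring

theorem stmt9 (Δ A φ₀ ω : ℝ) (ψ : SchwartzMap ℝ ℂ)
    (hΔ0 : 0 < Δ) (hΔ1 : Δ < 1)
    (hsupp : Function.support (FourierTransform.fourier (⇑ψ : ℝ → ℂ)) ⊆ Set.Icc (1 - Δ) (1 + Δ))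
    (hA : 0 < A) (hω : 0 < ω) :
    ∀ a : ℝ, 0 < a → ∀ b : ℝ,
      (∫ t : ℝ, (↑(A * Real.cos (φ₀ + 2 * Real.pi * ω * t)) : ℂ) *
          (↑(Real.sqrt a))⁻¹ * (starRingEnd ℂ) (ψ ((t - b) / a)))
        = (↑A / 2) * Complex.exp (Complex.I * ↑(φ₀ + 2 * Real.pi * ω * b)) *
          ↑(Real.sqrt a) * (starRingEnd ℂ) (FourierTransform.fourier (⇑ψ : ℝ → ℂ) (a * ω)) :=
  stmt9_general Δ A φ₀ ω ψ hΔ1 hsupp hω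
end

section
/- Let φ ∈ C²(ℝ) with c₁ < φ'(t) < c₂ and |φ''(t)| ≤ ε φ'(t), and let ψ be a Schwartz function. Fix b ∈ ℝ, a > 0, and j ∈ {0, 1, 2}. Write ψ^{(j)}_{a,b}(x) = a^{−(j+1/2)} ψ^{(j)}((x−b)/a). Then ∫_ℝ |cos(2πφ(t)) − cos(2π(φ(b) − bφ'(b)) + 2πφ'(b)t)| · |ψ^{(j)}_{a,b}(t)| dt ≤ ε (π c₂ a^{5/2−j} I^{(j)}_2 + (π ε c₂ / 3) a^{7/2−j} I^{(j)}_3), where I^{(j)}_i = ∫ |x|^i |ψ^{(j)}(x)| dx. -/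
/-!
Write `φ(t) = φ(b) + φ'(b)(t - b) + R(t)`. Since `|φ''| ≤ ε φ' ≤ ε c₂`, the remainder obeys
`|R(t)| ≤ (ε c₂ / 2)(t - b)²`, and as cosine is 1-Lipschitz the integrand is at most
`π ε c₂ (t - b)² |ψ^{(j)}_{a,b}(t)|`. The substitution `x = (t - b)/a` turns the integral of this
bound into `ε π c₂ a^{5/2-j} I^{(j)}_2`, so the cubic term of the claimed bound is not even needed.
-/

open MeasureTheory Real Set

theorem le_of_forall_sub_mul_hasDerivAt_nonpos {u u' : ℝ → ℝ} {b : ℝ}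
    (hu : ∀ s, HasDerivAt u (u' s) s) (hsign : ∀ s, (s - b) * u' s ≤ 0) (t : ℝ) :
    u t ≤ u b := by
  have hcont : Continuous u := continuous_iff_continuousAt.2 fun s => (hu s).continuousAt
  rcases le_total b t with hbt | htb
  · refine antitoneOn_of_hasDerivWithinAt_nonpos (convex_Ici b) hcont.continuousOn
      (fun s _ => (hu s).hasDerivWithinAt) (fun s hs => ?_) self_mem_Ici hbt hbt
    rw [interior_Ici] at hs
    exact nonpos_of_mul_nonpos_right (hsign s) (sub_pos.2 hs)
  · refine monotoneOn_of_hasDerivWithinAt_nonneg (convex_Iic b) hcont.continuousOn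
      (fun s _ => (hu s).hasDerivWithinAt) (fun s hs => ?_) htb self_mem_Iic htb
    rw [interior_Iic] at hs
    exact nonneg_of_mul_nonpos_right (hsign s) (sub_neg.2 hs)

theorem abs_sub_sub_mul_le_of_abs_sub_deriv_le {f f' : ℝ → ℝ} {b C : ℝ}
    (hf : ∀ s, HasDerivAt f (f' s) s) (hf' : ∀ s, |f' s - f' b| ≤ C * |s - b|) (t : ℝ) :
    |f t - f b - f' b * (t - b)| ≤ C / 2 * (t - b) ^ 2 := by
  have hquad : ∀ s, HasDerivAt (fun s => C / 2 * (s - b) ^ 2) (C * (s - b)) s := fun s =>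
    ((((hasDerivAt_id' s).sub_const b).fun_pow 2).const_mul (C / 2)).congr_deriv (by ring)
  have hlin : ∀ s, HasDerivAt (fun s => f s - f b - f' b * (s - b)) (f' s - f' b) s := fun s =>
    (((hf s).sub_const (f b)).fun_sub
      (((hasDerivAt_id' s).sub_const b).const_mul (f' b))).congr_deriv (by ring)
  have hbound : ∀ s, |(s - b) * (f' s - f' b)| ≤ C * (s - b) ^ 2 := fun s => by
    rw [abs_mul, ← sq_abs (s - b)]
    nlinarith [hf' s, abs_nonneg (s - b)]
  -- With `R s := f s - f b - f' b * (s - b)`, both `±R s - C / 2 * (s - b) ^ 2` vanish at `b`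
  -- and decrease away from it.
  rw [abs_le]
  constructor
  · have := le_of_forall_sub_mul_hasDerivAt_nonpos
      (u := fun s => -(f s - f b - f' b * (s - b)) - C / 2 * (s - b) ^ 2)
      (fun s => ((hlin s).neg).sub (hquad s))
      (fun s => by nlinarith [neg_abs_le ((s - b) * (f' s - f' b)), hbound s]) t
    norm_num at this
    linarith
  · have := le_of_forall_sub_mul_hasDerivAt_nonpos
      (u := fun s => (f s - f b - f' b * (s - b)) - C / 2 * (s - b) ^ 2)
      (fun s => (hlin s).sub (hquad s))
      (fun s => by nlinarith [le_abs_self ((s - b) * (f' s - f' b)), hbound s]) t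
    norm_num at this
    linarith

theorem abs_sub_sub_deriv_mul_le_of_abs_deriv_deriv_le {f : ℝ → ℝ} {C : ℝ}
    (hf : ContDiff ℝ 2 f) (hC : ∀ s, |deriv (deriv f) s| ≤ C) (b t : ℝ) :
    |f t - f b - deriv f b * (t - b)| ≤ C / 2 * (t - b) ^ 2 := by
  have hf' : Differentiable ℝ (deriv f) :=
    ((contDiff_succ_iff_deriv (n := 1)).1 hf).2.2.differentiable one_ne_zero
  refine abs_sub_sub_mul_le_of_abs_sub_deriv_le
    (fun s => (hf.differentiable two_ne_zero s).hasDerivAt) (fun s => ?_) t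
  simpa only [Real.norm_eq_abs] using
    convex_univ.norm_image_sub_le_of_norm_deriv_le (fun x _ => hf' x) (fun x _ => hC x)
      (mem_univ b) (mem_univ s)

theorem abs_cos_two_pi_sub_cos_linearization_le {φ : ℝ → ℝ} {C : ℝ} (hφ : ContDiff ℝ 2 φ)
    (hC : ∀ s, |deriv (deriv φ) s| ≤ C) (b t : ℝ) :
    |cos (2 * π * φ t) - cos (2 * π * (φ b - b * deriv φ b) + 2 * π * deriv φ b * t)| ≤
      π * C * |t - b| ^ 2 := by
  calc _ ≤ |2 * π * φ t - (2 * π * (φ b - b * deriv φ b) + 2 * π * deriv φ b * t)| :=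
        abs_cos_sub_cos_le _ _
    _ = 2 * π * |φ t - φ b - deriv φ b * (t - b)| := by
        rw [show _ - _ = 2 * π * (φ t - φ b - deriv φ b * (t - b)) by ring, abs_mul,
          abs_of_pos two_pi_pos]
    _ ≤ 2 * π * (C / 2 * (t - b) ^ 2) := by
        gcongr
        exact abs_sub_sub_deriv_mul_le_of_abs_deriv_deriv_le hφ hC b t
    _ = π * C * |t - b| ^ 2 := by
        rw [sq_abs]
        ring

theorem abs_sub_pow_mul_comp_sub_div_eq (g : ℝ → ℝ) (k : ℕ) (b : ℝ) {a : ℝ} (ha : a ≠ 0) :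
    (fun t => |t - b| ^ k * g ((t - b) / a)) =
      fun t => |a| ^ k * (|(t - b) / a| ^ k * g ((t - b) / a)) := by
  ext t
  rw [abs_div, div_pow, ← mul_assoc, mul_div_cancel₀ _ (pow_ne_zero k (abs_ne_zero.2 ha))]

theorem MeasureTheory.Integrable.abs_sub_pow_mul_comp_sub_div {g : ℝ → ℝ} {k : ℕ}
    (hg : Integrable fun x => |x| ^ k * g x) (b : ℝ) {a : ℝ} (ha : a ≠ 0) :
    Integrable fun t => |t - b| ^ k * g ((t - b) / a) := by
  rw [abs_sub_pow_mul_comp_sub_div_eq g k b ha]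
  exact ((hg.comp_div ha).comp_sub_right b).const_mul _

theorem integral_abs_sub_pow_mul_comp_sub_div (g : ℝ → ℝ) (k : ℕ) (b : ℝ) {a : ℝ} (ha : a ≠ 0) :
    ∫ t, |t - b| ^ k * g ((t - b) / a) = |a| ^ (k + 1) * ∫ x, |x| ^ k * g x := by
  rw [abs_sub_pow_mul_comp_sub_div_eq g k b ha, integral_const_mul,
    integral_sub_right_eq_self (fun t => |t / a| ^ k * g (t / a)) b,
    Measure.integral_comp_div (fun x => |x| ^ k * g x) a, smul_eq_mul, pow_succ, mul_assoc]

theorem SchwartzMap.integrable_abs_pow_mul_norm_iteratedDeriv {V : Type*}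
    [NormedAddCommGroup V] [NormedSpace ℝ V] (f : SchwartzMap ℝ V) (k n : ℕ) :
    Integrable fun x => |x| ^ k * ‖iteratedDeriv n f x‖ := by
  simpa only [Real.norm_eq_abs, norm_iteratedFDeriv_eq_norm_iteratedDeriv] using
    f.integrable_pow_mul_iteratedFDeriv volume k n

theorem stmt17_general (ε c₂ : ℝ) (φ : ℝ → ℝ) (ψ : SchwartzMap ℝ ℂ)
    (hε : 0 < ε)
    (hφ : ContDiff ℝ 2 φ)
    (hφ2 : ∀ t, deriv φ t < c₂)
    (hφ'' : ∀ t, |deriv (deriv φ) t| ≤ ε * deriv φ t)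
    (b a : ℝ) (ha : 0 < a) (j : ℕ) :
    (∫ t : ℝ, |Real.cos (2 * Real.pi * φ t) -
        Real.cos (2 * Real.pi * (φ b - b * deriv φ b) + 2 * Real.pi * deriv φ b * t)| *
        (a ^ (-(j : ℝ) - 1 / 2) * ‖iteratedDeriv j (⇑ψ) ((t - b) / a)‖))
      ≤ ε * (Real.pi * c₂ * a ^ ((5 : ℝ) / 2 - (j : ℝ)) *
          ∫ x : ℝ, |x| ^ 2 * ‖iteratedDeriv j (⇑ψ) x‖)
        + ε * (Real.pi * ε * c₂ / 3 * a ^ ((7 : ℝ) / 2 - (j : ℝ)) *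
          ∫ x : ℝ, |x| ^ 3 * ‖iteratedDeriv j (⇑ψ) x‖) := by
  have hφ'_nonneg : ∀ t, 0 ≤ deriv φ t := fun t =>
    nonneg_of_mul_nonneg_right ((abs_nonneg _).trans (hφ'' t)) hε
  have hc₂ : 0 ≤ c₂ := (hφ'_nonneg 0).trans (hφ2 0).le
  have hC : ∀ t, |deriv (deriv φ) t| ≤ ε * c₂ := fun t =>
    (hφ'' t).trans (mul_le_mul_of_nonneg_left (hφ2 t).le hε.le)
  have hpow : a ^ (-(j : ℝ) - 1 / 2) * a ^ 3 = a ^ ((5 : ℝ) / 2 - j) := by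
    rw [← Real.rpow_natCast, ← Real.rpow_add ha]
    congr 1
    push_cast
    ring
  have hcubic : 0 ≤ ε * (π * ε * c₂ / 3 * a ^ ((7 : ℝ) / 2 - j) *
      ∫ x : ℝ, |x| ^ 3 * ‖iteratedDeriv j ψ x‖) := by
    positivity
  calc _ ≤ ∫ t, π * (ε * c₂) * a ^ (-(j : ℝ) - 1 / 2) *
          (|t - b| ^ 2 * ‖iteratedDeriv j ψ ((t - b) / a)‖) := by
        refine integral_mono_of_nonneg (Filter.Eventually.of_forall fun t => by positivity)
          (((ψ.integrable_abs_pow_mul_norm_iteratedDeriv 2 j).abs_sub_pow_mul_comp_sub_div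
            b ha.ne').const_mul _) (Filter.Eventually.of_forall fun t => ?_)
        exact (mul_le_mul_of_nonneg_right (abs_cos_two_pi_sub_cos_linearization_le hφ hC b t)
          (by positivity)).trans_eq (by ring)
    _ = ε * (π * c₂ * a ^ ((5 : ℝ) / 2 - j) * ∫ x : ℝ, |x| ^ 2 * ‖iteratedDeriv j ψ x‖) := by
        rw [integral_const_mul,
          integral_abs_sub_pow_mul_comp_sub_div (fun x => ‖iteratedDeriv j ψ x‖) 2 b ha.ne',
          abs_of_pos ha, ← hpow]
        ring
    _ ≤ _ := le_add_of_nonneg_right hcubic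

theorem stmt17 (ε c₁ c₂ : ℝ) (φ : ℝ → ℝ) (ψ : SchwartzMap ℝ ℂ)
    (hε : 0 < ε) (hc0 : 0 < c₁) (hc : c₁ < c₂)
    (hφ : ContDiff ℝ 2 φ)
    (hφ1 : ∀ t, c₁ < deriv φ t) (hφ2 : ∀ t, deriv φ t < c₂)
    (hφ'' : ∀ t, |deriv (deriv φ) t| ≤ ε * deriv φ t)
    (b a : ℝ) (ha : 0 < a) (j : ℕ) (hj : j ≤ 2) :
    (∫ t : ℝ, |Real.cos (2 * Real.pi * φ t) -
        Real.cos (2 * Real.pi * (φ b - b * deriv φ b) + 2 * Real.pi * deriv φ b * t)| *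
        (a ^ (-(j : ℝ) - 1 / 2) * ‖iteratedDeriv j (⇑ψ) ((t - b) / a)‖))
      ≤ ε * (Real.pi * c₂ * a ^ ((5 : ℝ) / 2 - (j : ℝ)) *
          ∫ x : ℝ, |x| ^ 2 * ‖iteratedDeriv j (⇑ψ) x‖)
        + ε * (Real.pi * ε * c₂ / 3 * a ^ ((7 : ℝ) / 2 - (j : ℝ)) *
          ∫ x : ℝ, |x| ^ 3 * ‖iteratedDeriv j (⇑ψ) x‖) :=
  stmt17_general ε c₂ φ ψ hε hφ hφ2 hφ'' b a ha j
end
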